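/- Let M be a real m×n matrix, γ ∈ ℝᵐ, ṽ ∈ ℝⁿ, and let l > 0, κ > 0, λ > 0 be such that wᵀ·(I_n + l·Mᵀ·M)⁻¹·w ≥ λ·‖w‖² for all w ∈ ℝⁿ and 1/κ < l·λ. Set a := Mᵀ·γ ∈ ℝⁿ. Then −⟪a, l·Mᵀ·(I_m + l·M·Mᵀ)⁻¹·γ − ṽ⟫ ≤ −(l·λ − 1/κ)·‖a‖² + κ·‖ṽ‖². -/

import Mathlib

open Matrix

/-- Push-through identity. When `1 + A * B` is singular so is `1 + B * A` (Weinstein–Aronszajn),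
and both sides vanish because `⁻¹` is `0` there. -/
theorem Matrix.inv_one_add_mul_mul_comm {m n α : Type*} [Fintype m] [Fintype n] [DecidableEq m]
    [DecidableEq n] [CommRing α] (A : Matrix m n α) (B : Matrix n m α) :
    (1 + A * B)⁻¹ * A = A * (1 + B * A)⁻¹ := by
  by_cases hAB : IsUnit (1 + A * B).det
  · have hBA : IsUnit (1 + B * A).det := det_one_add_mul_comm A B ▸ hAB
    have hcomm : (1 + A * B) * A = A * (1 + B * A) := by
      rw [Matrix.add_mul, Matrix.mul_add, Matrix.one_mul, Matrix.mul_one, Matrix.mul_assoc]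
    calc (1 + A * B)⁻¹ * A = (1 + A * B)⁻¹ * (A * (1 + B * A) * (1 + B * A)⁻¹) := by
          rw [mul_nonsing_inv_cancel_right _ _ hBA]
      _ = (1 + A * B)⁻¹ * ((1 + A * B) * (A * (1 + B * A)⁻¹)) := by
          rw [← hcomm, Matrix.mul_assoc]
      _ = A * (1 + B * A)⁻¹ := nonsing_inv_mul_cancel_left _ _ hAB
  · have hBA : ¬IsUnit (1 + B * A).det := det_one_add_mul_comm A B ▸ hAB
    rw [nonsing_inv_apply_not_isUnit _ hAB, nonsing_inv_apply_not_isUnit _ hBA,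
      Matrix.zero_mul, Matrix.mul_zero]

theorem Matrix.two_mul_dotProduct_le {ι : Type*} [Fintype ι] (a v : ι → ℝ) {κ : ℝ}
    (hκ : 0 < κ) : 2 * (a ⬝ᵥ v) ≤ κ⁻¹ * (a ⬝ᵥ a) + κ * (v ⬝ᵥ v) := by
  have hsq : 0 ≤ (a - κ • v) ⬝ᵥ (a - κ • v) := by
    simpa using dotProduct_star_self_nonneg (a - κ • v)
  have hexpand : κ⁻¹ * ((a - κ • v) ⬝ᵥ (a - κ • v))
      = κ⁻¹ * (a ⬝ᵥ a) + κ * (v ⬝ᵥ v) - 2 * (a ⬝ᵥ v) := by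
    simp only [sub_dotProduct, dotProduct_sub, smul_dotProduct, dotProduct_smul, smul_eq_mul,
      dotProduct_comm v a]
    field_simp
    ring
  linarith [mul_nonneg (inv_nonneg.2 hκ.le) hsq]

theorem dissipation_inequality_general
    (m n : ℕ) (M : Matrix (Fin m) (Fin n) ℝ)
    (γ : Fin m → ℝ) (vt : Fin n → ℝ)
    (l κ lam : ℝ) (hl : 0 < l) (hκ : 0 < κ)
    (hquad : ∀ w : Fin n → ℝ, lam * (w ⬝ᵥ w) ≤ w ⬝ᵥ ((1 + l • (Mᵀ * M))⁻¹ *ᵥ w)) :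
    -((Mᵀ *ᵥ γ) ⬝ᵥ (l • (Mᵀ *ᵥ ((1 + l • (M * Mᵀ))⁻¹ *ᵥ γ)) - vt)) ≤
      -((l * lam - 1 / κ) * ((Mᵀ *ᵥ γ) ⬝ᵥ (Mᵀ *ᵥ γ))) + κ * (vt ⬝ᵥ vt) := by
  set a := Mᵀ *ᵥ γ
  have hpush : Mᵀ *ᵥ ((1 + l • (M * Mᵀ))⁻¹ *ᵥ γ) = (1 + l • (Mᵀ * M))⁻¹ *ᵥ a := by
    have h := Matrix.inv_one_add_mul_mul_comm Mᵀ (l • M)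
    simp only [Matrix.mul_smul, Matrix.smul_mul] at h
    rw [mulVec_mulVec, mulVec_mulVec, h]
  have hdissip : l * lam * (a ⬝ᵥ a) ≤ a ⬝ᵥ (l • ((1 + l • (Mᵀ * M))⁻¹ *ᵥ a)) := by
    rw [dotProduct_smul, smul_eq_mul, mul_assoc]
    exact mul_le_mul_of_nonneg_left (hquad a) hl.le
  have hyoung := Matrix.two_mul_dotProduct_le a vt hκ
  have ha : 0 ≤ a ⬝ᵥ a := by simpa using dotProduct_star_self_nonneg a
  have hv : 0 ≤ vt ⬝ᵥ vt := by simpa using dotProduct_star_self_nonneg vt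
  -- `hyoung` is twice as strong as needed; the factor 2 is absorbed since both squares are `≥ 0`.
  rw [hpush, dotProduct_sub, one_div]
  linarith [mul_nonneg (inv_nonneg.2 hκ.le) ha, mul_nonneg hκ.le hv]

/-- Appendix A (proof of Lemma 3.2), per-robot dissipation inequality:
with `a = Mᵀγ`, an eigenvalue lower bound `λ` on `(I_n + l Mᵀ M)⁻¹` and
`1/κ < l λ`, one has
`-⟪a, l Mᵀ (I_m + l M Mᵀ)⁻¹ γ - ṽ⟫ ≤ -(lλ - 1/κ) ‖a‖² + κ ‖ṽ‖²`. -/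
theorem dissipation_inequality
    (m n : ℕ) (M : Matrix (Fin m) (Fin n) ℝ)
    (γ : Fin m → ℝ) (vt : Fin n → ℝ)
    (l κ lam : ℝ) (hl : 0 < l) (hκ : 0 < κ) (hlam : 0 < lam)
    (hquad : ∀ w : Fin n → ℝ, lam * (w ⬝ᵥ w) ≤ w ⬝ᵥ ((1 + l • (Mᵀ * M))⁻¹ *ᵥ w))
    (hκl : 1 / κ < l * lam) :
    -((Mᵀ *ᵥ γ) ⬝ᵥ (l • (Mᵀ *ᵥ ((1 + l • (M * Mᵀ))⁻¹ *ᵥ γ)) - vt)) ≤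
      -((l * lam - 1 / κ) * ((Mᵀ *ᵥ γ) ⬝ᵥ (Mᵀ *ᵥ γ))) + κ * (vt ⬝ᵥ vt) :=
  dissipation_inequality_general m n M γ vt l κ lam hl hκ hquad
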